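/- For a graph P, there exists a covering {P_1, P_2} of size 2 satisfying condition A' if and only if diam(P) ≥ 5. -/
import Mathlib


open SimpleGraph

variable {V : Type*} {ι : Type*}

/-- Eccentricity (in `ℕ∞`) of a vertex. -/
noncomputable def gecc (G : SimpleGraph V) (v : V) : ℕ∞ := ⨆ u, G.edist v u

/-- Radius of a graph. -/
noncomputable def grad (G : SimpleGraph V) : ℕ∞ := ⨅ v, gecc G v

/-- Diameter of a graph. -/
noncomputable def gdiam (G : SimpleGraph V) : ℕ∞ := ⨆ v, gecc G v

/-- The center: vertices of minimum eccentricity. -/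
def gcenter (G : SimpleGraph V) : Set V := {v | gecc G v = grad G}

/-- Eccentric vertices of `v`. -/
def eccSet (G : SimpleGraph V) (v : V) : Set V := {u | G.edist v u = gecc G v}

/-- The centered periphery. -/
def cperiph (G : SimpleGraph V) : Set V := ⋃ z ∈ gcenter G, eccSet G z

/-- Uniform central graph. -/
def IsUCG (G : SimpleGraph V) : Prop := ∀ c ∈ gcenter G, eccSet G c = cperiph G

/-- Condition A. -/
def CondA (G : SimpleGraph V) (P : ι → Set V) : Prop :=
  ∀ i, ∃ p, p ∉ P i ∧ ∀ q ∈ P i, 2 ≤ G.edist q p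

/-- Condition B. -/
def CondB (G : SimpleGraph V) (P : ι → Set V) : Prop :=
  ∀ i, ∀ p ∈ P i,
    (∃ p', p' ∉ P i ∧ 3 ≤ G.edist p p') ∨ (∃ j, j ≠ i ∧ ∀ q ∈ P j, 2 ≤ G.edist p q)

/-- Condition A′. -/
def CondA' (G : SimpleGraph V) (P : ι → Set V) : Prop :=
  ∀ i, (∃ p, p ∉ P i ∧ ∀ q ∈ P i, 3 ≤ G.edist q p) ∨
    (∃ j, j ≠ i ∧ ∀ q ∈ P i, ∀ q' ∈ P j, 2 ≤ G.edist q q')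

/-- Condition B′. -/
def CondB' (G : SimpleGraph V) (P : ι → Set V) : Prop :=
  ∀ i, ∀ p ∈ P i, ∃ j, j ≠ i ∧ ∀ q ∈ P j, 2 ≤ G.edist p q

/-- Minimum size of a covering satisfying condition A. -/
noncomputable def covA (G : SimpleGraph V) : ℕ :=
  sInf {k | ∃ P : Fin k → Set V, (⋃ i, P i) = Set.univ ∧ CondA G P}

/-- Minimum size of a covering satisfying conditions A and B. -/
noncomputable def covAB (G : SimpleGraph V) : ℕ :=
  sInf {k | ∃ P : Fin k → Set V, (⋃ i, P i) = Set.univ ∧ CondA G P ∧ CondB G P}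

/-- Distance from a vertex to the center. -/
noncomputable def distToCenter (G : SimpleGraph V) (u : V) : ℕ∞ :=
  ⨅ z ∈ gcenter G, G.edist u z

/-- The set of vertices at distance exactly `m` from the center. -/
def Dlevel (G : SimpleGraph V) (m : ℕ) : Set V := {u | distToCenter G u = (m : ℕ∞)}

/-- Vertices of the centered periphery lying on a radial path through `x`. -/
def Pset (G : SimpleGraph V) (r : ℕ) (x : V) : Set V :=
  {p | p ∈ cperiph G ∧ ∃ c ∈ gcenter G, ∃ W : G.Walk c p,
    W.IsPath ∧ W.length = r ∧ x ∈ W.support}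

/-- All vertices lying on some radial path through `x`. -/
def radialSupport (G : SimpleGraph V) (r : ℕ) (x : V) : Set V :=
  {u | ∃ c ∈ gcenter G, ∃ p ∈ cperiph G, ∃ W : G.Walk c p,
    W.IsPath ∧ W.length = r ∧ x ∈ W.support ∧ u ∈ W.support}

private lemma edist_getVert_le' {V : Type*} (G : SimpleGraph V) {a b : V}
    (W : G.Walk a b) : ∀ (k : ℕ), k ≤ W.length → G.edist a (W.getVert k) ≤ k := by
  intro k
  induction k with
  | zero => intro _; simp [W.getVert_zero]
  | succ n ih =>
    intro hk
    have hn : n ≤ W.length := Nat.le_of_succ_le hk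
    have hadj : G.Adj (W.getVert n) (W.getVert (n+1)) := W.adj_getVert_succ hk
    calc G.edist a (W.getVert (n+1))
        ≤ G.edist a (W.getVert n) + G.edist (W.getVert n) (W.getVert (n+1)) :=
          SimpleGraph.edist_triangle
      _ ≤ (n : ℕ∞) + 1 := by
          refine add_le_add (ih hn) ?_
          simpa using hadj.toWalk.edist_le
      _ = ((n + 1 : ℕ) : ℕ∞) := by push_cast; ring

/-- A graph admits a covering of size 2 (with nonempty parts) satisfying condition A′ if
and only if its diameter is at least 5. -/
theorem stmt19 [Nonempty V] (G : SimpleGraph V) :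
    (∃ P : Fin 2 → Set V, (∀ i, (P i).Nonempty) ∧ (⋃ i, P i) = Set.univ ∧ CondA' G P) ↔
      5 ≤ gdiam G := by
  have le_diam : ∀ a b : V, G.edist a b ≤ gdiam G := by
    intro a b
    have h1 : G.edist a b ≤ gecc G a := by unfold gecc; exact le_iSup _ b
    have h2 : gecc G a ≤ gdiam G := by unfold gdiam; exact le_iSup _ a
    exact le_trans h1 h2
  constructor
  · rintro ⟨P, hne, hcov, hA⟩
    have hmem : ∀ x : V, x ∈ P 0 ∨ x ∈ P 1 := by
      intro x
      have hx : x ∈ ⋃ i, P i := hcov ▸ Set.mem_univ x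
      obtain ⟨i, hi⟩ := Set.mem_iUnion.mp hx
      fin_cases i
      · exact Or.inl hi
      · exact Or.inr hi
    have top_case : (∀ q ∈ P 0, ∀ q' ∈ P 1, 2 ≤ G.edist q q') → 5 ≤ gdiam G := by
      intro hd
      obtain ⟨a, ha⟩ := hne 0
      obtain ⟨b, hb⟩ := hne 1
      have key : ∀ {x y : V} (W : G.Walk x y), x ∈ P 0 → y ∈ P 1 → False := by
        intro x y W
        induction W with
        | nil =>
          intro hx hy
          have h2 := hd _ hx _ hy
          simp [SimpleGraph.edist_self] at h2
        | @cons xx yy zz h W ih =>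
          intro hx hz
          rcases hmem yy with hy | hy
          · exact ih hy hz
          · have h2 := hd xx hx yy hy
            have h1 : G.edist xx yy ≤ 1 := by simpa using h.toWalk.edist_le
            have : (2 : ℕ∞) ≤ 1 := le_trans h2 h1
            norm_num at this
      have hnr : ¬ G.Reachable a b := fun ⟨W⟩ => key W ha hb
      have : G.edist a b = ⊤ := SimpleGraph.edist_eq_top_of_not_reachable hnr
      calc (5 : ℕ∞) ≤ ⊤ := le_top
        _ = G.edist a b := this.symm
        _ ≤ gdiam G := le_diam a b
    rcases hA 0 with ⟨p0, hp0n, hp0⟩ | ⟨j, hj, h2⟩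
    swap
    · have hj1 : j = 1 := by omega
      subst hj1
      exact top_case h2
    rcases hA 1 with ⟨p1, hp1n, hp1⟩ | ⟨j, hj, h2⟩
    swap
    · have hj0 : j = 0 := by omega
      subst hj0
      refine top_case fun q hq q' hq' => ?_
      rw [SimpleGraph.edist_comm]
      exact h2 q' hq' q hq
    have hp0m : p0 ∈ P 1 := (hmem p0).resolve_left hp0n
    have hp1m : p1 ∈ P 0 := (hmem p1).resolve_right hp1n
    have hd01 : 3 ≤ G.edist p0 p1 := hp1 p0 hp0m
    have key5 : 5 ≤ G.edist p0 p1 := by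
      by_contra hlt
      push_neg at hlt
      have hne_top : G.edist p0 p1 ≠ ⊤ := ne_top_of_lt hlt
      set n : ℕ := (G.edist p0 p1).toNat with hn
      have hcoe : G.edist p0 p1 = (n : ℕ∞) := (ENat.coe_toNat hne_top).symm
      have hn3 : 3 ≤ n := by
        rw [hcoe] at hd01; exact_mod_cast hd01
      have hn4 : n ≤ 4 := by
        rw [hcoe] at hlt
        have : (n : ℕ∞) < 5 := hlt
        exact_mod_cast Order.le_of_lt_add_one (by exact_mod_cast this)
      obtain ⟨W, hW⟩ := SimpleGraph.exists_walk_of_edist_eq_coe hcoe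
      set x := W.getVert 2 with hx
      have h1 : G.edist p0 x ≤ 2 := by
        have := edist_getVert_le' G W 2 (by omega)
        simpa using this
      have h2 : G.edist p1 x ≤ 2 := by
        have hlen : W.reverse.length = n := by simp [hW]
        have := edist_getVert_le' G W.reverse (n - 2) (by omega)
        rw [SimpleGraph.Walk.getVert_reverse] at this
        have hidx : W.length - (n - 2) = 2 := by omega
        rw [hidx] at this
        calc G.edist p1 x ≤ ((n - 2 : ℕ) : ℕ∞) := this
          _ ≤ ((2 : ℕ) : ℕ∞) := by exact_mod_cast (by omega : n - 2 ≤ 2)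
          _ = 2 := by norm_cast
      rcases hmem x with hxm | hxm
      · have h3 := hp0 x hxm
        rw [SimpleGraph.edist_comm] at h3
        have : (3 : ℕ∞) ≤ 2 := le_trans h3 h1
        norm_num at this
      · have h3 := hp1 x hxm
        rw [SimpleGraph.edist_comm] at h3
        have : (3 : ℕ∞) ≤ 2 := le_trans h3 h2
        norm_num at this
    exact le_trans key5 (le_diam p0 p1)
  · intro h5
    have h4 : (4 : ℕ∞) < gdiam G := lt_of_lt_of_le (by norm_num) h5
    unfold gdiam at h4
    obtain ⟨u, hu⟩ := lt_iSup_iff.mp h4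
    unfold gecc at hu
    obtain ⟨v, hv⟩ := lt_iSup_iff.mp hu
    have h5uv : 5 ≤ G.edist u v := by
      have := Order.add_one_le_of_lt hv
      calc (5 : ℕ∞) = 4 + 1 := by norm_num
        _ ≤ G.edist u v := this
    refine ⟨![{x | G.edist u x ≤ 2}, {x | ¬ G.edist u x ≤ 2}], ?_, ?_, ?_⟩
    · intro i
      fin_cases i
      · exact ⟨u, by simp [SimpleGraph.edist_self]⟩
      · refine ⟨v, ?_⟩
        simp only [Matrix.cons_val_one, Matrix.head_cons, Set.mem_setOf_eq]
        intro hle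
        have : (5 : ℕ∞) ≤ 2 := le_trans h5uv hle
        norm_num at this
    · ext x
      simp only [Set.mem_iUnion, Set.mem_univ, iff_true]
      by_cases h : G.edist u x ≤ 2
      · exact ⟨0, by simpa using h⟩
      · exact ⟨1, by simpa using h⟩
    · intro i
      fin_cases i
      · left
        refine ⟨v, ?_, ?_⟩
        · simp only [Fin.isValue, Matrix.cons_val_zero, Set.mem_setOf_eq]
          intro hle
          have : (5 : ℕ∞) ≤ 2 := le_trans h5uv hle
          norm_num at this
        · intro q hq
          simp only [Fin.isValue, Matrix.cons_val_zero, Set.mem_setOf_eq] at hq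
          by_contra hc
          push_neg at hc
          have hqv : G.edist q v ≤ 2 := Order.le_of_lt_add_one (by exact_mod_cast hc)
          have htri : G.edist u v ≤ G.edist u q + G.edist q v := SimpleGraph.edist_triangle
          have : (5 : ℕ∞) ≤ 2 + 2 := le_trans h5uv (le_trans htri (add_le_add hq hqv))
          norm_num at this
      · left
        refine ⟨u, ?_, ?_⟩
        · simp [SimpleGraph.edist_self]
        · intro q hq
          simp only [Matrix.cons_val_one, Matrix.head_cons, Set.mem_setOf_eq] at hq
          push_neg at hq
          rw [SimpleGraph.edist_comm]
          calc (3 : ℕ∞) = 2 + 1 := by norm_num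
            _ ≤ G.edist u q := Order.add_one_le_of_lt hq
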